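/- arXiv:1908.06453 — 3 statements merged into one kernel-verified Lean document; each statement's English description precedes it below -/
import Mathlib

section
/- Let n1, n2 be positive natural numbers and let B1 be an n1 × n1 integer matrix and B2 an n2 × n2 integer matrix such that the entries in each row of B1 sum to zero and the entries in each row of B2 sum to zero. Let B be the (n1+n2) × (n1+n2) block-diagonal integer matrix with diagonal blocks B1 and B2 (and zero off-diagonal blocks). Then for every choice of a row index i and a column index j, the (n1+n2−1) × (n1+n2−1) matrix obtained from B by deleting row i and column j has determinant zero. -/
open Finset Matrix

/-!
The indicator vectors of the two blocks both lie in the kernel of `B`, because the rows of each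
block sum to zero. Whichever column `j` is deleted, the indicator of the block not containing `j`
vanishes at `j`, so it restricts to a nonzero kernel vector of the minor, whose determinant
therefore vanishes.
-/

namespace Matrix

variable {R : Type*}

theorem submatrix_mulVec_comp_eq_zero [NonUnitalNonAssocSemiring R]
    {l m n o : Type*} [Fintype n] [Fintype o] {M : Matrix m n R} {v : n → R}
    (hMv : M *ᵥ v = 0) (r : l → m) {c : o → n} (hc : Function.Injective c)
    (hv : ∀ k ∉ Set.range c, v k = 0) :
    M.submatrix r c *ᵥ (v ∘ c) = 0 := by
  ext a
  calc (M.submatrix r c *ᵥ (v ∘ c)) a = ∑ k, M (r a) k * v k :=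
        Fintype.sum_of_injective c hc _ _ (fun k hk => by simp [hv k hk]) fun _ => rfl
    _ = 0 := congrFun hMv (r a)

theorem reindex_mulVec_comp_symm [NonUnitalNonAssocSemiring R] {l m n o : Type*} [Fintype n]
    [Fintype o] (M : Matrix m n R) (e₁ : m ≃ l) (e₂ : n ≃ o) (v : n → R) :
    reindex e₁ e₂ M *ᵥ (v ∘ e₂.symm) = (M *ᵥ v) ∘ e₁.symm := by
  simp [reindex_apply, submatrix_mulVec_equiv, Function.comp_assoc]

theorem det_submatrix_succAbove_eq_zero_of_mulVec_eq_zero [CommRing R] [IsDomain R] {n : ℕ}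
    {M : Matrix (Fin (n + 1)) (Fin (n + 1)) R} {v : Fin (n + 1) → R}
    (hMv : M *ᵥ v = 0) (hv : v ≠ 0) (i j : Fin (n + 1)) (hvj : v j = 0) :
    (M.submatrix i.succAbove j.succAbove).det = 0 := by
  refine exists_mulVec_eq_zero_iff.mp ⟨v ∘ j.succAbove, ?_, ?_⟩
  · obtain ⟨k, hk⟩ := Function.ne_iff.mp hv
    obtain ⟨b, rfl⟩ := Fin.exists_succAbove_eq (x := k) (y := j) (by rintro rfl; exact hk hvj)
    exact Function.ne_iff.mpr ⟨b, hk⟩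
  · refine submatrix_mulVec_comp_eq_zero hMv _ Fin.succAbove_right_injective fun k hk => ?_
    obtain rfl : k = j := by simpa [Fin.range_succAbove] using hk
    exact hvj

theorem exists_fromBlocks_zero_mulVec_eq_zero [NonAssocSemiring R] [Nontrivial R]
    {m n : Type*} [Fintype m] [Fintype n] [Nonempty m] [Nonempty n]
    {A : Matrix m m R} {D : Matrix n n R}
    (hA : ∀ i, ∑ j, A i j = 0) (hD : ∀ i, ∑ j, D i j = 0) (s : m ⊕ n) :
    ∃ v, fromBlocks A 0 0 D *ᵥ v = 0 ∧ v ≠ 0 ∧ v s = 0 := by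
  have hA1 : A *ᵥ 1 = 0 := funext fun i => by simpa [mulVec, dotProduct] using hA i
  have hD1 : D *ᵥ 1 = 0 := funext fun i => by simpa [mulVec, dotProduct] using hD i
  cases s with
  | inl _ =>
    refine ⟨Sum.elim 0 1, ?_, fun h => ?_, rfl⟩
    · simp [fromBlocks_mulVec, hD1]
    · exact one_ne_zero (congrFun h (Sum.inr (Classical.arbitrary n)))
  | inr _ =>
    refine ⟨Sum.elim 1 0, ?_, fun h => ?_, rfl⟩
    · simp [fromBlocks_mulVec, hA1]
    · exact one_ne_zero (congrFun h (Sum.inl (Classical.arbitrary m)))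

end Matrix

/-- If `B1`, `B2` are square integer matrices (of positive sizes `n1`, `n2`)
whose rows each sum to zero, and `B` is the block-diagonal matrix with blocks `B1`, `B2`,
then every `(n1+n2-1) × (n1+n2-1)` minor of `B` obtained by deleting one row and one
column vanishes. -/
theorem split_block_diagonal_minor_det_zero
    (n1 n2 : ℕ) (h1 : 0 < n1) (h2 : 0 < n2)
    (B1 : Matrix (Fin n1) (Fin n1) ℤ) (B2 : Matrix (Fin n2) (Fin n2) ℤ)
    (hrow1 : ∀ i, ∑ j, B1 i j = 0) (hrow2 : ∀ i, ∑ j, B2 i j = 0)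
    (B : Matrix (Fin (n1 + n2)) (Fin (n1 + n2)) ℤ)
    (hB : B = Matrix.reindex finSumFinEquiv finSumFinEquiv
      (Matrix.fromBlocks B1 0 0 B2))
    (i j : Fin (n1 + n2)) :
    Matrix.det (fun a b : Fin (n1 + n2 - 1) =>
      B (Fin.cast (by omega)
          ((Fin.cast (by omega : n1 + n2 = (n1 + n2 - 1) + 1) i).succAbove a))
        (Fin.cast (by omega)
          ((Fin.cast (by omega : n1 + n2 = (n1 + n2 - 1) + 1) j).succAbove b))) = 0 := by
  have hm : n1 + n2 = (n1 + n2 - 1) + 1 := by omega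
  have : NeZero n1 := ⟨h1.ne'⟩
  have : NeZero n2 := ⟨h2.ne'⟩
  let e : Fin (n1 + n2 - 1 + 1) ≃ Fin n1 ⊕ Fin n2 :=
    (finCongr hm.symm).trans finSumFinEquiv.symm
  have hBe : reindex (finCongr hm) (finCongr hm) B =
      reindex e.symm e.symm (fromBlocks B1 0 0 B2) := by
    subst hB
    ext a b
    simp [e]
  obtain ⟨w, hw, hw0, hwj⟩ :=
    exists_fromBlocks_zero_mulVec_eq_zero hrow1 hrow2 (finSumFinEquiv.symm j)
  have hBw : reindex (finCongr hm) (finCongr hm) B *ᵥ (w ∘ e) = 0 := by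
    rw [hBe, show w ∘ e = w ∘ e.symm.symm from rfl, reindex_mulVec_comp_symm, hw]
    rfl
  have hwe0 : w ∘ e ≠ 0 := fun h => hw0 <| funext fun s => by simpa using congrFun h (e.symm s)
  -- the minor is definitionally `(reindex (finCongr hm) (finCongr hm) B).submatrix _ _`
  exact det_submatrix_succAbove_eq_zero_of_mulVec_eq_zero hBw hwe0 _ _ (by simpa [e] using hwj)
end

section
/- Fix n ∈ ℕ and functions k, r : (Fin n → Bool) → ℕ. Assume that k(S') ≤ k(S) + 1 whenever the state S' is obtained from a state S by changing exactly one coordinate from false to true. Then d_max(⟨n,k,r⟩) ≤ n + 2·k(S_A). If moreover k(S) ≤ k(S_A) for every state S having exactly one coordinate equal to true (A-adequacy of the diagram), then d_max(⟨n,k,r⟩) = n + 2·k(S_A). -/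
open Finset

noncomputable section

/-- The ring `(ℤ[z])[A, A⁻¹]`: Laurent polynomials in `A` over `ℤ[z]`. -/
abbrev LP := LaurentPolynomial (Polynomial ℤ)

/-- The homological variable `z`. -/
def zz : LP := LaurentPolynomial.C Polynomial.X

/-- `a(S)`: the number of `A`-smoothings (coordinates where `S` is `false`). -/
def aCount {n : ℕ} (S : Fin n → Bool) : ℕ := (Finset.univ.filter fun i => S i = false).card

/-- `b(S)`: the number of `B`-smoothings (coordinates where `S` is `true`). -/
def bCount {n : ℕ} (S : Fin n → Bool) : ℕ := (Finset.univ.filter fun i => S i = true).card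

/-- Two states are adjacent if they differ in exactly one coordinate. -/
def Adjacent {n : ℕ} (S S' : Fin n → Bool) : Prop :=
  ∃ i : Fin n, S' = Function.update S i (!(S i))

/-- The bracket state sum
`⟨n,k,r⟩ = Σ_S A^(a(S)-b(S)) · (-A⁻² - A²)^(k S) · z^(r S)` in `(ℤ[z])[A,A⁻¹]`,
where `A^m = LaurentPolynomial.T m`. -/
def bracket (n : ℕ) (k r : (Fin n → Bool) → ℕ) : LP :=
  ∑ S : Fin n → Bool,
    LaurentPolynomial.T ((aCount S : ℤ) - (bCount S : ℤ)) *
      (-(LaurentPolynomial.T (-2)) - LaurentPolynomial.T 2) ^ (k S) * zz ^ (r S)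

/-!
Write `δ = -A⁻² - A²`. The state `S` contributes `A^(a(S) - b(S)) δ^k(S) z^r(S)`, whose largest
exponent of `A` is `a(S) - b(S) + 2 k(S) = n - 2 b(S) + 2 k(S)`, with coefficient `±z^r(S)`.
Switching the `B`-smoothings of `S` on one at a time, starting from `S_A`, gives
`k(S) ≤ k(S_A) + b(S)`, so no exponent exceeds `n + 2 k(S_A)`. Under `A`-adequacy the first
switch does not raise `k`, so `k(S) < k(S_A) + b(S)` for `S ≠ S_A`: only `S_A` reaches the
exponent `n + 2 k(S_A)`, and its coefficient `±z^r(S_A)` survives.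
-/

open LaurentPolynomial

section Laurent

variable {R : Type*}

lemma LaurentPolynomial.coeff_mul_T [Semiring R] (p : R[T;T⁻¹]) (m d : ℤ) :
    (p * T m).coeff d = p.coeff (d - m) := by
  simpa [sub_eq_add_neg] using AddMonoidAlgebra.coeff_mul_single_apply p (1 : R) m d

lemma LaurentPolynomial.coeff_T_mul_mul_C [Semiring R] (m : ℤ) (p : R[T;T⁻¹]) (c : R) (d : ℤ) :
    (T m * p * C c).coeff d = p.coeff (d - m) * c := by
  rw [T_mul, ← single_eq_C, AddMonoidAlgebra.coeff_mul_single_apply, neg_zero, add_zero,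
    coeff_mul_T]

lemma LaurentPolynomial.coeff_neg_T_sub_T_pow_succ [Ring R] (k : ℕ) (d : ℤ) :
    ((-T (-2) - T 2 : R[T;T⁻¹]) ^ (k + 1)).coeff d =
      -((-T (-2) - T 2 : R[T;T⁻¹]) ^ k).coeff (d + 2) -
        ((-T (-2) - T 2 : R[T;T⁻¹]) ^ k).coeff (d - 2) := by
  rw [pow_succ, mul_sub, mul_neg, AddMonoidAlgebra.coeff_sub, AddMonoidAlgebra.coeff_neg,
    Finsupp.sub_apply, Finsupp.neg_apply, coeff_mul_T, coeff_mul_T, sub_neg_eq_add]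

lemma LaurentPolynomial.coeff_neg_T_sub_T_pow_of_lt [Ring R] {k : ℕ} {d : ℤ} (h : 2 * k < d) :
    ((-T (-2) - T 2 : R[T;T⁻¹]) ^ k).coeff d = 0 := by
  induction k generalizing d with
  | zero => rw [pow_zero, ← T_zero, T_apply, if_neg (by omega)]
  | succ k ih => rw [coeff_neg_T_sub_T_pow_succ, ih (by omega), ih (by omega), neg_zero, sub_zero]

lemma LaurentPolynomial.coeff_neg_T_sub_T_pow_two_mul [Ring R] (k : ℕ) :
    ((-T (-2) - T 2 : R[T;T⁻¹]) ^ k).coeff (2 * k) = (-1) ^ k := by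
  induction k with
  | zero => rw [pow_zero, ← T_zero, T_apply, Nat.cast_zero, mul_zero, if_pos rfl, pow_zero]
  | succ k ih =>
    rw [coeff_neg_T_sub_T_pow_succ, coeff_neg_T_sub_T_pow_of_lt (by omega),
      show 2 * ((k + 1 : ℕ) : ℤ) - 2 = 2 * k by omega, ih, pow_succ, mul_neg_one, neg_zero,
      zero_sub]

end Laurent

section StateTerm

def stateTerm (m : ℤ) (k r : ℕ) : LP := T m * (-T (-2) - T 2) ^ k * zz ^ r

lemma coeff_stateTerm (m : ℤ) (k r : ℕ) (d : ℤ) :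
    (stateTerm m k r).coeff d = ((-T (-2) - T 2 : LP) ^ k).coeff (d - m) * Polynomial.X ^ r := by
  rw [stateTerm, zz, ← map_pow, coeff_T_mul_mul_C]

lemma coeff_stateTerm_of_lt {m : ℤ} {k : ℕ} (r : ℕ) {d : ℤ} (h : m + 2 * k < d) :
    (stateTerm m k r).coeff d = 0 := by
  rw [coeff_stateTerm, coeff_neg_T_sub_T_pow_of_lt (by omega), zero_mul]

lemma coeff_stateTerm_ne_zero (m : ℤ) (k r : ℕ) : (stateTerm m k r).coeff (m + 2 * k) ≠ 0 := by
  rw [coeff_stateTerm, add_sub_cancel_left, coeff_neg_T_sub_T_pow_two_mul]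
  exact mul_ne_zero (pow_ne_zero _ (neg_ne_zero.mpr one_ne_zero))
    (pow_ne_zero _ Polynomial.X_ne_zero)

end StateTerm

section UpdateInduction

variable {ι : Type*} [DecidableEq ι] {k : (ι → Bool) → ℕ}

lemma decide_mem_insert_eq_update (a : ι) (s : Finset ι) :
    (fun i => decide (i ∈ insert a s)) = Function.update (fun i => decide (i ∈ s)) a true := by
  funext i
  by_cases hi : i = a <;> simp [hi]

variable (hk : ∀ (S : ι → Bool) (i : ι), S i = false → k (Function.update S i true) ≤ k S + 1)
include hk

lemma le_add_card_of_update_le (s : Finset ι) :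
    k (fun i => decide (i ∈ s)) ≤ k (fun _ => false) + #s := by
  induction s using Finset.induction_on with
  | empty => simp
  | insert a s ha ih =>
    have := hk (fun i => decide (i ∈ s)) a (by simpa using ha)
    rw [← decide_mem_insert_eq_update] at this
    rw [card_insert_of_notMem ha]
    omega

lemma add_one_le_add_card_of_update_le
    (hadq : ∀ a : ι, k (fun i => decide (i ∈ ({a} : Finset ι))) ≤ k (fun _ => false))
    {s : Finset ι} (hs : s.Nonempty) :
    k (fun i => decide (i ∈ s)) + 1 ≤ k (fun _ => false) + #s := by
  induction hs using Finset.Nonempty.cons_induction with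
  | singleton a => simpa using hadq a
  | cons a s ha _ ih =>
    have := hk (fun i => decide (i ∈ s)) a (by simpa using ha)
    rw [← decide_mem_insert_eq_update] at this
    rw [cons_eq_insert, card_insert_of_notMem ha]
    omega

end UpdateInduction

section States

variable {n : ℕ} {k : (Fin n → Bool) → ℕ}

lemma coeff_bracket (r : (Fin n → Bool) → ℕ) (d : ℤ) :
    (bracket n k r).coeff d = ∑ S, (stateTerm (aCount S - bCount S) (k S) (r S)).coeff d := by
  rw [bracket, AddMonoidAlgebra.coeff_sum, Finsupp.finsetSum_apply]
  rfl

lemma aCount_add_bCount (S : Fin n → Bool) : aCount S + bCount S = n := by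
  simpa [aCount, bCount] using card_filter_add_card_filter_not (s := univ) (fun i => S i = false)

lemma bCount_decide_mem (s : Finset (Fin n)) : bCount (fun i => decide (i ∈ s)) = #s := by
  simp [bCount]

lemma decide_mem_filter_eq_true (S : Fin n → Bool) :
    (fun i => decide (i ∈ univ.filter (S · = true))) = S := by
  funext i
  simp

variable (hk : ∀ (S : Fin n → Bool) (i : Fin n), S i = false →
  k (Function.update S i true) ≤ k S + 1)
include hk

lemma le_add_bCount (S : Fin n → Bool) : k S ≤ k (fun _ => false) + bCount S := by
  have := le_add_card_of_update_le hk (univ.filter (S · = true))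
  rwa [decide_mem_filter_eq_true] at this

lemma add_one_le_add_bCount (hadq : ∀ S : Fin n → Bool, bCount S = 1 → k S ≤ k (fun _ => false))
    {S : Fin n → Bool} (hS : S ≠ fun _ => false) : k S + 1 ≤ k (fun _ => false) + bCount S := by
  have hne : (univ.filter (S · = true)).Nonempty := by
    contrapose! hS
    funext i
    simpa using filter_eq_empty_iff.mp hS (mem_univ i)
  have := add_one_le_add_card_of_update_le hk
    (fun a => hadq _ (by rw [bCount_decide_mem, card_singleton])) hne
  rwa [decide_mem_filter_eq_true] at this

end States

/-- Lemma 3.6(i): if `k` increases by at most one when a single smoothing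
is switched from `A` to `B`, then every exponent of `A` occurring in `⟨n,k,r⟩` is at most
`n + 2·k(S_A)`; and if the diagram is `A`-adequate, the exponent `n + 2·k(S_A)` occurs. -/
theorem dmax_bracket (n : ℕ) (k r : (Fin n → Bool) → ℕ)
    (hk : ∀ (S : Fin n → Bool) (i : Fin n), S i = false →
      k (Function.update S i true) ≤ k S + 1) :
    (∀ d ∈ (bracket n k r).coeff.support, d ≤ (n : ℤ) + 2 * k (fun _ => false)) ∧
    ((∀ S : Fin n → Bool, bCount S = 1 → k S ≤ k (fun _ => false)) →
      ((n : ℤ) + 2 * (k (fun _ => false) : ℤ)) ∈ (bracket n k r).coeff.support) := by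
  refine ⟨fun d hd => ?_, fun hadq => ?_⟩
  · rw [Finsupp.mem_support_iff, coeff_bracket] at hd
    obtain ⟨S, -, hS⟩ := exists_ne_zero_of_sum_ne_zero hd
    by_contra! hlt
    have := aCount_add_bCount S
    have := le_add_bCount hk S
    exact hS (coeff_stateTerm_of_lt _ (by omega))
  · rw [Finsupp.mem_support_iff, coeff_bracket, sum_eq_single (fun _ => false)]
    · have hA : aCount (fun _ : Fin n => false) = n := by simp [aCount]
      have hB : bCount (fun _ : Fin n => false) = 0 := by simp [bCount]
      simpa [hA, hB] using coeff_stateTerm_ne_zero n (k fun _ => false) (r fun _ => false)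
    · intro S _ hS
      have := aCount_add_bCount S
      have := add_one_le_add_bCount hk hadq hS
      exact coeff_stateTerm_of_lt _ (by omega)
    · simp
end
end

section
/- Fix n ∈ ℕ, functions k, r : (Fin n → Bool) → ℕ, and an integer w. Let ι be the ring automorphism of (ℤ[z])[A,A^{−1}] determined by ι(A) = A^{−1} and ι(z) = z, and for a state S let ¬S denote the state obtained by negating every coordinate of S (so ¬ interchanges A- and B-smoothings). Then ι( (−A)^{−3w} · ⟨n, k, r⟩ ) = (−A)^{−3(−w)} · ⟨n, k∘¬, r∘¬⟩. -/
open Finset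

noncomputable section

/-- The variable `A = T 1` as a unit of `(ℤ[z])[A,A⁻¹]`. -/
def uA : LPˣ := (LaurentPolynomial.isUnit_T (R := Polynomial ℤ) 1).unit

/-- The negation of a state, interchanging `A`- and `B`-smoothings. -/
def negState {n : ℕ} (S : Fin n → Bool) : Fin n → Bool := fun i => !(S i)

/-!
A ring endomorphism of `(ℤ[z])[A,A⁻¹]` is determined by the images of `A` and `z`, so `ι` is
`LaurentPolynomial.invert`. Inverting `A` negates the exponent `a(S) - b(S)` and fixes the loop
value `-A⁻² - A²`, so reindexing the state sum by `¬` (which swaps `a` and `b`) turns `ι⟨n,k,r⟩`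
into `⟨n, k∘¬, r∘¬⟩`; and `ι` sends the unit `-A` to its inverse, hence `(-A)^m` to `(-A)^(-m)`.
-/

open LaurentPolynomial

theorem LaurentPolynomial.ringHom_ext {R S : Type*} [CommSemiring R] [Semiring S]
    {f g : R[T;T⁻¹] →+* S} (hC : f.comp C = g.comp C) (hT : f (T 1) = g (T 1)) : f = g := by
  refine IsLocalization.ringHom_ext (Submonoid.powers (Polynomial.X : Polynomial R)) <|
    Polynomial.ringHom_ext' ?_ ?_
  · ext r
    simpa [algebraMap_eq_toLaurent] using RingHom.congr_fun hC r
  · simpa [algebraMap_eq_toLaurent] using hT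

theorem ringHom_eq_invert {f : LP →+* LP} (hA : f (T 1) = T (-1)) (hz : f zz = zz) :
    f = invert.toRingHom := by
  refine LaurentPolynomial.ringHom_ext (Polynomial.ringHom_ext (fun a => ?_) ?_) ?_
  · simp
  · simpa [zz] using hz
  · simpa using hA

theorem negState_involutive (n : ℕ) : Function.Involutive (negState (n := n)) :=
  fun S => funext fun i => Bool.not_not (S i)

theorem aCount_negState {n : ℕ} (S : Fin n → Bool) : aCount (negState S) = bCount S := by
  simp [aCount, bCount, negState]

theorem bCount_negState {n : ℕ} (S : Fin n → Bool) : bCount (negState S) = aCount S := by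
  simp [aCount, bCount, negState]

theorem invert_bracket (n : ℕ) (k r : (Fin n → Bool) → ℕ) :
    invert (bracket n k r) = bracket n (k ∘ negState) (r ∘ negState) := by
  rw [bracket, bracket, ← Equiv.sum_comp (negState_involutive n).toPerm, map_sum]
  refine Finset.sum_congr rfl fun S _ => ?_
  simp [zz, aCount_negState, bCount_negState, neg_sub_comm]

theorem map_val_zpow_of_map_eq_val_inv {M F : Type*} [Monoid M] [FunLike F M M]
    [MonoidHomClass F M M] (f : F) {u : Mˣ} (hu : f u = ↑u⁻¹) (m : ℤ) :
    f ↑(u ^ m) = ↑(u ^ (-m)) := by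
  have hmap : Units.map (f : M →* M) u = u⁻¹ := Units.ext hu
  rw [← MonoidHom.coe_coe f, ← Units.coe_map, map_zpow, hmap, inv_zpow']

theorem invert_neg_uA : invert ((-uA : LPˣ) : LP) = ↑(-uA)⁻¹ := by
  have huA : (uA : LP) = T 1 := IsUnit.unit_spec _
  rw [← Units.mul_eq_one_iff_eq_inv, Units.val_neg, map_neg, huA, invert_T,
    neg_mul_neg (T (-1) : LP), ← T_add, neg_add_cancel, T_zero]

/-- Proposition 4.14: for any ring automorphism `ι` of `(ℤ[z])[A,A⁻¹]`
with `ι(A) = A⁻¹` and `ι(z) = z`, we have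
`ι((-A)^(-3w) · ⟨n,k,r⟩) = (-A)^(-3(-w)) · ⟨n, k∘¬, r∘¬⟩`. -/
theorem bracket_mirror (n : ℕ) (k r : (Fin n → Bool) → ℕ) (w : ℤ)
    (ι : LP ≃+* LP)
    (hA : ι (LaurentPolynomial.T 1) = LaurentPolynomial.T (-1))
    (hz : ι zz = zz) :
    ι ((((-uA) ^ (-3 * w) : LPˣ) : LP) * bracket n k r) =
      (((-uA) ^ (-3 * (-w)) : LPˣ) : LP) * bracket n (k ∘ negState) (r ∘ negState) := by
  have hι (x : LP) : ι x = invert x := RingHom.congr_fun (ringHom_eq_invert (f := ι) hA hz) x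
  rw [map_mul, hι, hι, invert_bracket,
    map_val_zpow_of_map_eq_val_inv invert invert_neg_uA, show -(-3 * w) = -3 * -w by ring]
end
end
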